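/- For every n ≥ 1 and every s ∈ {0,…,n−1} there exists a bipartite latin bitrade B_s ⊆ Q_3^n with |B_s| = 2^{n+1} − 2^{s+1}; one such bitrade is B_s = ({0,1}^{n−s} △ {1,2}^{n−s}) × {0,1}^s. -/

import Mathlib

/-!
A line `line i a` meets `B` in as many points as the section `update a i ⁻¹' B` has elements.
Sections of a box `∏ⱼ tⱼ` are `tᵢ` or `∅`, sections of a product `B₁ × B₂` are sections of a
factor or `∅`, and taking sections commutes with `△`. Hence every section of
`({0,1}^m △ {1,2}^m) × {0,1}^s` is `∅`, `{0,1}`, `{1,2}` or `{0,1} △ {1,2} = {0,2}`.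

Products of 2-colourable induced subgraphs of Hamming graphs are 2-colourable (add the colours
mod 2). The cube `{0,1}^s` is coloured by the parity of the coordinate sum. For
`{0,1}^m △ {1,2}^m` add the indicator of `{1,2}^m` to that parity: an edge inside one cube
changes one coordinate by `±1`, while an edge between the cubes replaces a `0` by a `2`,
all other coordinates being `1`.

The two cubes meet only in the all-ones word, so `|{0,1}^m △ {1,2}^m| = 2 ^ (m + 1) - 2`.
-/

/-- The 1-dimensional face (line) of `Q_k^n` in direction `i` through the point `a`. -/
def line {k n : ℕ} (i : Fin n) (a : Fin n → Fin k) : Set (Fin n → Fin k) :=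
  {x | ∀ j, j ≠ i → x j = a j}

/-- `B ⊆ Q_k^n` is a latin bitrade if it meets every 1-dimensional face in 0 or 2 points. -/
def IsLatinBitrade {k n : ℕ} (B : Set (Fin n → Fin k)) : Prop :=
  ∀ (i : Fin n) (a : Fin n → Fin k),
    (B ∩ line i a).ncard = 0 ∨ (B ∩ line i a).ncard = 2

/-- The Hamming graph `Γ Q_k^n`. -/
def hammingGraph (k n : ℕ) : SimpleGraph (Fin n → Fin k) where
  Adj x y := hammingDist x y = 1
  symm := by
    constructor
    intro x y h
    rwa [hammingDist_comm]
  loopless := by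
    constructor
    intro x h
    simp [hammingDist_self] at h

/-- A latin bitrade is bipartite if the subgraph of the Hamming graph induced by it
is bipartite (2-colorable). -/
def IsBipartiteBitrade {k n : ℕ} (B : Set (Fin n → Fin k)) : Prop :=
  IsLatinBitrade B ∧ ((hammingGraph k n).induce B).Colorable 2

/-- The Cartesian product via concatenation of tuples. -/
def cartProd {k n m : ℕ} (B₁ : Set (Fin n → Fin k)) (B₂ : Set (Fin m → Fin k)) :
    Set (Fin (n + m) → Fin k) :=
  {z | ∃ x ∈ B₁, ∃ y ∈ B₂, z = Fin.append x y}

/-- The subcube `{0,1}^m` of `Q_3^m`. -/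
def cube01 (m : ℕ) : Set (Fin m → Fin 3) := {x | ∀ j, x j = 0 ∨ x j = 1}

/-- The subcube `{1,2}^m` of `Q_3^m`. -/
def cube12 (m : ℕ) : Set (Fin m → Fin 3) := {x | ∀ j, x j = 1 ∨ x j = 2}

open Function

lemma Set.ncard_univ_pi {ι : Type*} [Fintype ι] {α : ι → Type*} (t : ∀ i, Set (α i)) :
    (Set.univ.pi t).ncard = ∏ i, (t i).ncard := by
  simp only [← Nat.card_coe_set_eq, Nat.card_congr (Equiv.Set.univPi t), Nat.card_pi]

lemma Set.ncard_symmDiff_add_two_mul_ncard_inter {α : Type*} {A B : Set α} (hA : A.Finite)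
    (hB : B.Finite) : (symmDiff A B).ncard + 2 * (A ∩ B).ncard = A.ncard + B.ncard := by
  have hsub : A ∩ B ⊆ A ∪ B := Set.inter_subset_left.trans Set.subset_union_left
  have hle := Set.ncard_le_ncard hsub (hA.union hB)
  rw [show symmDiff A B = (A ∪ B) \ (A ∩ B) from symmDiff_eq_sup_sdiff_inf A B,
    Set.ncard_sdiff hsub (hA.inter_of_left B), ← Set.ncard_union_add_ncard_inter A B hA hB]
  omega

section Hamming

variable {k n : ℕ}

lemma hammingGraph_adj_iff {x y : Fin n → Fin k} :
    (hammingGraph k n).Adj x y ↔ ∃ i, x i ≠ y i ∧ ∀ j ≠ i, x j = y j := by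
  have h : (hammingGraph k n).Adj x y ↔ ∃ i, ∀ j, x j ≠ y j ↔ j = i := by
    simp [hammingGraph, hammingDist, Finset.card_eq_one, Finset.ext_iff]
  refine h.trans (exists_congr fun i => ⟨fun hi => ⟨(hi i).2 rfl, fun j hj => ?_⟩,
    fun ⟨hi, hoff⟩ j => ⟨fun hj => ?_, fun hj => hj ▸ hi⟩⟩)
  · exact not_not.1 (mt (hi j).1 hj)
  · exact by_contra (hj ∘ hoff j)

def lineSection (B : Set (Fin n → Fin k)) (i : Fin n) (a : Fin n → Fin k) : Set (Fin k) :=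
  update a i ⁻¹' B

lemma line_eq_range_update (i : Fin n) (a : Fin n → Fin k) :
    line i a = Set.range (update a i) := by
  ext x
  refine ⟨fun hx => ⟨x i, ?_⟩, ?_⟩
  · ext j
    by_cases hj : j = i
    · subst hj; simp
    · simp [update_of_ne hj, hx j hj]
  · rintro ⟨v, rfl⟩ j hj
    exact update_of_ne hj _ _

lemma ncard_inter_line (B : Set (Fin n → Fin k)) (i : Fin n) (a : Fin n → Fin k) :
    (B ∩ line i a).ncard = (lineSection B i a).ncard := by
  rw [line_eq_range_update, ← Set.image_preimage_eq_inter_range,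
    Set.ncard_image_of_injective _ (update_injective a i), lineSection]

lemma isLatinBitrade_iff_lineSection {B : Set (Fin n → Fin k)} :
    IsLatinBitrade B ↔
      ∀ i a, (lineSection B i a).ncard = 0 ∨ (lineSection B i a).ncard = 2 := by
  simp only [IsLatinBitrade, ncard_inter_line]

lemma lineSection_symmDiff (A B : Set (Fin n → Fin k)) (i : Fin n) (a : Fin n → Fin k) :
    lineSection (symmDiff A B) i a = symmDiff (lineSection A i a) (lineSection B i a) :=
  Set.preimage_symmDiff A B

lemma lineSection_univ_pi_eq_or (t : Fin n → Set (Fin k)) (i : Fin n) (a : Fin n → Fin k) :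
    lineSection (Set.univ.pi t) i a = t i ∨ lineSection (Set.univ.pi t) i a = ∅ := by
  by_cases h : ∀ j ≠ i, a j ∈ t j
  · exact Or.inl (Set.update_preimage_univ_pi h)
  · push Not at h
    obtain ⟨j, hj, hja⟩ := h
    refine Or.inr (Set.eq_empty_of_forall_notMem fun v hv => hja ?_)
    simpa [update_of_ne hj] using hv j (Set.mem_univ j)

lemma isLatinBitrade_univ_pi {t : Fin n → Set (Fin k)} (ht : ∀ j, (t j).ncard = 2) :
    IsLatinBitrade (Set.univ.pi t) := by
  refine isLatinBitrade_iff_lineSection.2 fun i a => ?_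
  rcases lineSection_univ_pi_eq_or t i a with h | h <;> rw [h]
  exacts [Or.inr (ht i), Or.inl (Set.ncard_empty _)]

def symbolParity (x : Fin n → Fin k) : ZMod 2 := ∑ j, ((x j : ℕ) : ZMod 2)

lemma symbolParity_add_symbolParity {x y : Fin n → Fin k} {i : Fin n}
    (hoff : ∀ j ≠ i, x j = y j) :
    symbolParity x + symbolParity y = ((x i : ℕ) : ZMod 2) + ((y i : ℕ) : ZMod 2) := by
  rw [symbolParity, symbolParity, ← Finset.sum_add_distrib]
  refine Finset.sum_eq_single i (fun j _ hj => ?_) (by simp)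
  rw [hoff j hj, CharTwo.add_self_eq_zero]

end Hamming

lemma ZMod.ne_of_add_eq_one {a b : ZMod 2} (h : a + b = 1) : a ≠ b := by
  revert a b; decide

lemma Fin.natCast_add_natCast_eq_one {a b : Fin 3} (hab : a ≠ b) (h1 : a = 1 ∨ b = 1) :
    ((a : ℕ) : ZMod 2) + ((b : ℕ) : ZMod 2) = 1 := by
  revert a b; decide

lemma Fin.natAdd_ne_castAdd {m n : ℕ} (i : Fin m) (j : Fin n) :
    Fin.natAdd n i ≠ Fin.castAdd m j := by
  rw [Ne, Fin.ext_iff, Fin.val_natAdd, Fin.val_castAdd]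
  omega

section Product

variable {k n m : ℕ} {B₁ : Set (Fin n → Fin k)} {B₂ : Set (Fin m → Fin k)}

lemma mem_cartProd {z : Fin (n + m) → Fin k} :
    z ∈ cartProd B₁ B₂ ↔ z ∘ Fin.castAdd m ∈ B₁ ∧ z ∘ Fin.natAdd n ∈ B₂ := by
  constructor
  · rintro ⟨x, hx, y, hy, rfl⟩
    exact ⟨by simpa [comp_def] using hx, by simpa [comp_def] using hy⟩
  · rintro ⟨hx, hy⟩
    exact ⟨_, hx, _, hy, Fin.append_castAdd_natAdd.symm⟩

lemma cartProd_eq_image_appendEquiv : cartProd B₁ B₂ = Fin.appendEquiv n m '' B₁ ×ˢ B₂ := by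
  ext z
  simp [(Fin.appendEquiv n m).image_eq_preimage_symm, mem_cartProd, comp_def]

lemma ncard_cartProd : (cartProd B₁ B₂).ncard = B₁.ncard * B₂.ncard := by
  rw [cartProd_eq_image_appendEquiv, Set.ncard_image_of_injective _ (Equiv.injective _),
    Set.ncard_prod]

lemma lineSection_cartProd_castAdd_eq_or (i : Fin n) (a : Fin (n + m) → Fin k) :
    lineSection (cartProd B₁ B₂) (Fin.castAdd m i) a = lineSection B₁ i (a ∘ Fin.castAdd m) ∨
      lineSection (cartProd B₁ B₂) (Fin.castAdd m i) a = ∅ := by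
  have hright (v : Fin k) : update a (Fin.castAdd m i) v ∘ Fin.natAdd n = a ∘ Fin.natAdd n :=
    update_comp_eq_of_forall_ne _ _ fun j => Fin.natAdd_ne_castAdd j i
  by_cases h : a ∘ Fin.natAdd n ∈ B₂
  · left; ext v
    simp [lineSection, mem_cartProd, update_comp_eq_of_injective _ (Fin.castAdd_injective n m),
      hright, h]
  · right; ext v
    simp [lineSection, mem_cartProd, hright, h]

lemma lineSection_cartProd_natAdd_eq_or (i : Fin m) (a : Fin (n + m) → Fin k) :
    lineSection (cartProd B₁ B₂) (Fin.natAdd n i) a = lineSection B₂ i (a ∘ Fin.natAdd n) ∨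
      lineSection (cartProd B₁ B₂) (Fin.natAdd n i) a = ∅ := by
  have hleft (v : Fin k) : update a (Fin.natAdd n i) v ∘ Fin.castAdd m = a ∘ Fin.castAdd m :=
    update_comp_eq_of_forall_ne _ _ fun j => (Fin.natAdd_ne_castAdd i j).symm
  by_cases h : a ∘ Fin.castAdd m ∈ B₁
  · left; ext v
    simp [lineSection, mem_cartProd, update_comp_eq_of_injective _ (Fin.natAdd_injective m n),
      hleft, h]
  · right; ext v
    simp [lineSection, mem_cartProd, hleft, h]

lemma IsLatinBitrade.cartProd (h₁ : IsLatinBitrade B₁) (h₂ : IsLatinBitrade B₂) :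
    IsLatinBitrade (cartProd B₁ B₂) := by
  rw [isLatinBitrade_iff_lineSection] at *
  intro i a
  induction i using Fin.addCases with
  | left i =>
    rcases lineSection_cartProd_castAdd_eq_or i a with h | h <;> rw [h]
    exacts [h₁ i _, Or.inl (Set.ncard_empty _)]
  | right i =>
    rcases lineSection_cartProd_natAdd_eq_or i a with h | h <;> rw [h]
    exacts [h₂ i _, Or.inl (Set.ncard_empty _)]

lemma colorable_induce_cartProd (h₁ : ((hammingGraph k n).induce B₁).Colorable 2)
    (h₂ : ((hammingGraph k m).induce B₂).Colorable 2) :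
    ((hammingGraph k (n + m)).induce (cartProd B₁ B₂)).Colorable 2 := by
  obtain ⟨C₁⟩ := h₁
  obtain ⟨C₂⟩ := h₂
  refine ⟨SimpleGraph.Coloring.mk (fun z => C₁ ⟨_, (mem_cartProd.1 z.2).1⟩ +
    C₂ ⟨_, (mem_cartProd.1 z.2).2⟩) fun {z z'} hzz' => ?_⟩
  obtain ⟨i, hi, hoff⟩ := hammingGraph_adj_iff.1 hzz'
  induction i using Fin.addCases with
  | left i =>
    have hadj : (hammingGraph k n).Adj (z.1 ∘ Fin.castAdd m) (z'.1 ∘ Fin.castAdd m) :=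
      hammingGraph_adj_iff.2 ⟨i, hi, fun j hj => hoff _ ((Fin.castAdd_injective n m).ne hj)⟩
    have hright : z.1 ∘ Fin.natAdd n = z'.1 ∘ Fin.natAdd n :=
      funext fun j => hoff _ (Fin.natAdd_ne_castAdd j i)
    intro h
    simp only [hright, add_left_inj] at h
    exact C₁.valid (SimpleGraph.induce_adj.2 hadj) h
  | right i =>
    have hadj : (hammingGraph k m).Adj (z.1 ∘ Fin.natAdd n) (z'.1 ∘ Fin.natAdd n) :=
      hammingGraph_adj_iff.2 ⟨i, hi, fun j hj => hoff _ ((Fin.natAdd_injective m n).ne hj)⟩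
    have hleft : z.1 ∘ Fin.castAdd m = z'.1 ∘ Fin.castAdd m :=
      funext fun j => hoff _ (Fin.natAdd_ne_castAdd i j).symm
    intro h
    simp only [hleft, add_right_inj] at h
    exact C₂.valid (SimpleGraph.induce_adj.2 hadj) h

end Product

lemma cube01_eq_univ_pi (m : ℕ) : cube01 m = Set.univ.pi fun _ => {0, 1} := by
  ext; simp [cube01]

lemma cube12_eq_univ_pi (m : ℕ) : cube12 m = Set.univ.pi fun _ => {1, 2} := by
  ext; simp [cube12]

lemma ncard_cube01 (m : ℕ) : (cube01 m).ncard = 2 ^ m := by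
  simp [cube01_eq_univ_pi, Set.ncard_univ_pi]

lemma ncard_cube12 (m : ℕ) : (cube12 m).ncard = 2 ^ m := by
  simp [cube12_eq_univ_pi, Set.ncard_univ_pi]

lemma cube01_inter_cube12 (m : ℕ) : cube01 m ∩ cube12 m = {fun _ => 1} := by
  have h : ({0, 1} ∩ {1, 2} : Set (Fin 3)) = {1} := by
    ext v; fin_cases v <;> simp
  rw [cube01_eq_univ_pi, cube12_eq_univ_pi, ← Set.pi_inter_distrib, h, Set.univ_pi_singleton]

lemma ncard_symmDiff_cube01_cube12 (m : ℕ) :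
    (symmDiff (cube01 m) (cube12 m)).ncard + 2 = 2 ^ (m + 1) := by
  have h := Set.ncard_symmDiff_add_two_mul_ncard_inter (Set.toFinite (cube01 m))
    (Set.toFinite (cube12 m))
  rw [cube01_inter_cube12, Set.ncard_singleton, ncard_cube01, ncard_cube12] at h
  rw [pow_succ]
  omega

lemma isLatinBitrade_cube01 (m : ℕ) : IsLatinBitrade (cube01 m) := by
  rw [cube01_eq_univ_pi]
  exact isLatinBitrade_univ_pi fun _ => Set.ncard_pair (by decide)

lemma isLatinBitrade_symmDiff_cube01_cube12 (m : ℕ) :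
    IsLatinBitrade (symmDiff (cube01 m) (cube12 m)) := by
  have h02 : symmDiff ({0, 1} : Set (Fin 3)) {1, 2} = {0, 2} := by
    ext v; fin_cases v <;> simp [Set.mem_symmDiff]
  refine isLatinBitrade_iff_lineSection.2 fun i a => ?_
  rw [lineSection_symmDiff, cube01_eq_univ_pi, cube12_eq_univ_pi]
  rcases lineSection_univ_pi_eq_or (fun _ => {0, 1}) i a with h | h <;>
    rcases lineSection_univ_pi_eq_or (fun _ => {1, 2}) i a with h' | h' <;>
    rw [h, h'] <;> simp [h02, Set.symmDiff_def]

lemma colorable_induce_cube01 (m : ℕ) : ((hammingGraph 3 m).induce (cube01 m)).Colorable 2 := by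
  refine ⟨SimpleGraph.Coloring.mk (fun x => symbolParity x.1) fun {x y} hxy => ?_⟩
  obtain ⟨i, hi, hoff⟩ := hammingGraph_adj_iff.1 (SimpleGraph.induce_adj.1 hxy)
  refine ZMod.ne_of_add_eq_one ?_
  rw [symbolParity_add_symbolParity hoff]
  refine Fin.natCast_add_natCast_eq_one hi ?_
  rcases x.2 i with h | h <;> rcases y.2 i with h' | h' <;> simp_all

lemma eq_zero_and_eq_two_of_cube01_of_cube12 {m : ℕ} {x y : Fin m → Fin 3} {i : Fin m}
    (hx : x ∈ cube01 m) (hx' : x ∉ cube12 m) (hy : y ∈ cube12 m) (hy' : y ∉ cube01 m)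
    (hoff : ∀ j ≠ i, x j = y j) : x i = 0 ∧ y i = 2 := by
  have hxi : x i ≠ 1 := fun h => hx' fun j => by
    by_cases hj : j = i
    · exact hj ▸ Or.inl h
    · exact hoff j hj ▸ hy j
  have hyi : y i ≠ 1 := fun h => hy' fun j => by
    by_cases hj : j = i
    · exact hj ▸ Or.inr h
    · exact (hoff j hj).symm ▸ hx j
  exact ⟨(hx i).resolve_right hxi, (hy i).resolve_left hyi⟩

lemma colorable_induce_symmDiff_cube01_cube12 (m : ℕ) :
    ((hammingGraph 3 m).induce (symmDiff (cube01 m) (cube12 m))).Colorable 2 := by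
  let c (x : Fin m → Fin 3) : ZMod 2 := symbolParity x + (cube12 m).indicator 1 x
  refine ⟨SimpleGraph.Coloring.mk (fun x => c x.1) fun {x y} hxy => ?_⟩
  obtain ⟨i, hi, hoff⟩ := hammingGraph_adj_iff.1 (SimpleGraph.induce_adj.1 hxy)
  refine ZMod.ne_of_add_eq_one ?_
  have hc : c x + c y = ((x.1 i : ℕ) : ZMod 2) + ((y.1 i : ℕ) : ZMod 2) +
      ((cube12 m).indicator 1 x.1 + (cube12 m).indicator 1 y.1) := by
    simp only [c]; rw [add_add_add_comm, symbolParity_add_symbolParity hoff]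
  rw [hc]
  rcases Set.mem_symmDiff.1 x.2 with ⟨hx, hx'⟩ | ⟨hx, hx'⟩ <;>
    rcases Set.mem_symmDiff.1 y.2 with ⟨hy, hy'⟩ | ⟨hy, hy'⟩
  · simp only [Set.indicator_of_notMem hx', Set.indicator_of_notMem hy', add_zero]
    refine Fin.natCast_add_natCast_eq_one hi ?_
    rcases hx i with h | h <;> rcases hy i with h' | h' <;> simp_all
  · obtain ⟨h0, h2⟩ := eq_zero_and_eq_two_of_cube01_of_cube12 hx hx' hy hy' hoff
    rw [h0, h2, Set.indicator_of_notMem hx', Set.indicator_of_mem hy, Pi.one_apply]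
    decide
  · obtain ⟨h0, h2⟩ := eq_zero_and_eq_two_of_cube01_of_cube12 hy hy' hx hx'
      fun j hj => (hoff j hj).symm
    rw [h0, h2, Set.indicator_of_notMem hy', Set.indicator_of_mem hx, Pi.one_apply]
    decide
  · simp only [Set.indicator_of_mem hx, Set.indicator_of_mem hy, Pi.one_apply,
      CharTwo.add_self_eq_zero, add_zero]
    refine Fin.natCast_add_natCast_eq_one hi ?_
    rcases hx i with h | h <;> rcases hy i with h' | h' <;> simp_all

/-- The paper's `n` is `m + s`. -/
theorem stmt_13_general (m s : ℕ) :
    IsBipartiteBitrade (cartProd (symmDiff (cube01 m) (cube12 m)) (cube01 s)) ∧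
    (cartProd (symmDiff (cube01 m) (cube12 m)) (cube01 s)).ncard =
      2 ^ (m + s + 1) - 2 ^ (s + 1) := by
  refine ⟨⟨(isLatinBitrade_symmDiff_cube01_cube12 m).cartProd (isLatinBitrade_cube01 s),
    colorable_induce_cartProd (colorable_induce_symmDiff_cube01_cube12 m)
      (colorable_induce_cube01 s)⟩, ?_⟩
  have h := ncard_symmDiff_cube01_cube12 m
  rw [ncard_cartProd, ncard_cube01, show m + s + 1 = (m + 1) + s by ring, pow_add, ← h,
    add_mul, pow_succ', Nat.add_sub_cancel]

/-- Here `n = m + s` with `m = n - s ≥ 1`, i.e. `n ≥ 1` and `s ∈ {0,…,n-1}`: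
the set `B_s = ({0,1}^{n-s} △ {1,2}^{n-s}) × {0,1}^s ⊆ Q_3^n` is a bipartite
latin bitrade of cardinality `2^{n+1} - 2^{s+1}`. -/
theorem stmt_13 (m s : ℕ) (hm : 1 ≤ m) :
    IsBipartiteBitrade (cartProd (symmDiff (cube01 m) (cube12 m)) (cube01 s)) ∧
    (cartProd (symmDiff (cube01 m) (cube12 m)) (cube01 s)).ncard =
      2 ^ (m + s + 1) - 2 ^ (s + 1) :=
  stmt_13_general m s
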